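/- For N ≥ 3 the S-matrix S^T has a simple bound-state pole at θ = 2πi/N: the limit of (θ − 2πi/N)·S^T(θ) as θ → 2πi/N (θ ≠ 2πi/N) exists and equals 2i·sin(2π/N)·sin(πB/(2N))·sin(π(2−B)/(2N)) / (sin(π(2+B)/(2N))·sin(π(4−B)/(2N))). -/

import Mathlib

/-!
Every factor of `S^T` is a ratio `r_c(θ) = sinh((θ - c)/2) / sinh((θ + c)/2)`, the `Z_N` factor
being `1 / r_a` with `a = 2πi/N`. As `sinh((θ - a)/2)` has a simple zero at `a` with derivative
`1/2`, `(θ - a) / r_a(θ) → 2 sinh a`. The two Toda ratios are continuous at `a`: at `θ = (u + v)i`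
and `c = (v - u)i` the ratio `r_c` is `sin u / sin v`, and for `0 < B < 2`, `N ≥ 3` the arguments
`v = π(2 + B)/(2N)` and `v = π(4 - B)/(2N)` of the denominators lie in `(0, π)`.
-/

open Complex Topology Filter

/-- The two-particle S-matrix of the `Z_N`-Ising model. -/
noncomputable def SZ (N : ℕ) (θ : ℂ) : ℂ :=
  Complex.sinh ((θ + 2 * (Real.pi : ℂ) * I / N) / 2) /
    Complex.sinh ((θ - 2 * (Real.pi : ℂ) * I / N) / 2)

/-- The two-particle S-matrix of the affine `A_{N-1}`-Toda model. -/
noncomputable def SToda (N : ℕ) (B : ℝ) (θ : ℂ) : ℂ :=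
  SZ N θ *
    (Complex.sinh ((θ - I * (Real.pi : ℂ) * (B : ℂ) / N) / 2) /
      Complex.sinh ((θ + I * (Real.pi : ℂ) * (B : ℂ) / N) / 2)) *
    (Complex.sinh ((θ - I * (Real.pi : ℂ) * (2 - (B : ℂ)) / N) / 2) /
      Complex.sinh ((θ + I * (Real.pi : ℂ) * (2 - (B : ℂ)) / N) / 2))

theorem HasDerivAt.tendsto_sub_div_of_eq_zero {𝕜 : Type*} [NontriviallyNormedField 𝕜]
    {f : 𝕜 → 𝕜} {f' c : 𝕜} (hf : HasDerivAt f f' c) (hc : f c = 0) (hf' : f' ≠ 0) :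
    Tendsto (fun x => (x - c) / f x) (𝓝[≠] c) (𝓝 f'⁻¹) := by
  have hslope := (hasDerivAt_iff_tendsto_slope.mp hf).inv₀ hf'
  simpa only [slope_fun_def_field, hc, sub_zero, inv_div] using hslope

theorem Complex.sin_ofReal_pi_mul_div_ne_zero {x M : ℝ} (hx : 0 < x) (hxM : x < M) :
    sin (Real.pi * x / M) ≠ 0 := by
  have hM : 0 < M := hx.trans hxM
  have hlt : Real.pi * x / M < Real.pi := by
    rw [div_lt_iff₀ hM]; nlinarith [Real.pi_pos]
  exact_mod_cast (Real.sin_pos_of_pos_of_lt_pi (by positivity) hlt).ne'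

noncomputable def sinhRatio (c θ : ℂ) : ℂ :=
  sinh ((θ - c) / 2) / sinh ((θ + c) / 2)

theorem SToda_eq_sinhRatio (N : ℕ) (B : ℝ) (θ : ℂ) :
    SToda N B θ = (sinhRatio (2 * Real.pi * I / N) θ)⁻¹ *
      sinhRatio (I * Real.pi * B / N) θ * sinhRatio (I * Real.pi * (2 - B) / N) θ := by
  simp only [SToda, SZ, sinhRatio, inv_div]

theorem sinhRatio_mul_I (u v : ℂ) : sinhRatio ((v - u) * I) ((u + v) * I) = sin u / sin v := by
  rw [sinhRatio, show ((u + v) * I - (v - u) * I) / 2 = u * I by ring,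
    show ((u + v) * I + (v - u) * I) / 2 = v * I by ring, sinh_mul_I, sinh_mul_I,
    mul_div_mul_right _ _ I_ne_zero]

theorem tendsto_sub_mul_inv_sinhRatio (c : ℂ) :
    Tendsto (fun θ => (θ - c) * (sinhRatio c θ)⁻¹) (𝓝[≠] c) (𝓝 (2 * sinh c)) := by
  have hzero : HasDerivAt (fun θ => sinh ((θ - c) / 2)) (1 / 2) c := by
    simpa using ((hasDerivAt_id c).sub_const c).div_const 2 |>.csinh
  have hpole := hzero.tendsto_sub_div_of_eq_zero (by simp) (by norm_num)
  have hregular : Tendsto (fun θ => sinh ((θ + c) / 2)) (𝓝[≠] c) (𝓝 (sinh c)) := by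
    have : ContinuousAt (fun θ => sinh ((θ + c) / 2)) c := by fun_prop
    simpa [← two_mul] using this.tendsto.mono_left nhdsWithin_le_nhds
  convert hpole.mul hregular using 2
  · simp only [sinhRatio, inv_div]; ring
  · norm_num

theorem tendsto_sinhRatio_mul_I (u v : ℂ) (hv : sin v ≠ 0) :
    Tendsto (sinhRatio ((v - u) * I)) (𝓝 ((u + v) * I)) (𝓝 (sin u / sin v)) := by
  have hden : sinh (((u + v) * I + (v - u) * I) / 2) ≠ 0 := by
    rw [show ((u + v) * I + (v - u) * I) / 2 = v * I by ring, sinh_mul_I]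
    exact mul_ne_zero hv I_ne_zero
  have : ContinuousAt (sinhRatio ((v - u) * I)) ((u + v) * I) := by
    unfold sinhRatio; fun_prop (disch := exact hden)
  rw [← sinhRatio_mul_I]
  exact this.tendsto

/-- For `N ≥ 3` the S-matrix `S^T` has a simple bound-state pole at `θ = 2πi/N` with
residue `2i·sin(2π/N)·sin(πB/(2N))·sin(π(2−B)/(2N)) / (sin(π(2+B)/(2N))·sin(π(4−B)/(2N)))`. -/
theorem SToda_boundstate_pole (N : ℕ) (hN : 3 ≤ N) (B : ℝ) (hB0 : 0 < B) (hB2 : B < 2) :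
    Tendsto (fun θ : ℂ => (θ - 2 * (Real.pi : ℂ) * I / N) * SToda N B θ)
      (𝓝[≠] (2 * (Real.pi : ℂ) * I / N))
      (𝓝 (2 * I * Complex.sin (2 * (Real.pi : ℂ) / N) *
        Complex.sin ((Real.pi : ℂ) * (B : ℂ) / (2 * N)) *
        Complex.sin ((Real.pi : ℂ) * (2 - (B : ℂ)) / (2 * N)) /
        (Complex.sin ((Real.pi : ℂ) * (2 + (B : ℂ)) / (2 * N)) *
          Complex.sin ((Real.pi : ℂ) * (4 - (B : ℂ)) / (2 * N))))) := by
  have hN3 : (3 : ℝ) ≤ N := by exact_mod_cast hN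
  have hsin₁ :=
    Complex.sin_ofReal_pi_mul_div_ne_zero (x := 2 + B) (M := 2 * N) (by linarith) (by linarith)
  have hsin₂ :=
    Complex.sin_ofReal_pi_mul_div_ne_zero (x := 4 - B) (M := 2 * N) (by linarith) (by linarith)
  push_cast at hsin₁ hsin₂
  have hB : Tendsto (sinhRatio (I * Real.pi * B / N)) (𝓝 (2 * Real.pi * I / N))
      (𝓝 (sin (Real.pi * (2 - B) / (2 * N)) / sin (Real.pi * (2 + B) / (2 * N)))) := by
    convert tendsto_sinhRatio_mul_I (Real.pi * (2 - B) / (2 * N)) _ hsin₁ using 2 <;> ring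
  have h2B : Tendsto (sinhRatio (I * Real.pi * (2 - B) / N)) (𝓝 (2 * Real.pi * I / N))
      (𝓝 (sin (Real.pi * B / (2 * N)) / sin (Real.pi * (4 - B) / (2 * N)))) := by
    convert tendsto_sinhRatio_mul_I (Real.pi * B / (2 * N)) _ hsin₂ using 2 <;> ring
  convert ((tendsto_sub_mul_inv_sinhRatio _).mul (hB.mono_left nhdsWithin_le_nhds)).mul
    (h2B.mono_left nhdsWithin_le_nhds) using 2 with θ
  · rw [SToda_eq_sinhRatio]; ring
  · rw [show 2 * (Real.pi : ℂ) * I / N = 2 * Real.pi / N * I by ring, sinh_mul_I]; ring
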